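/- Let q ≡ 2 (mod 3) be a prime power, C₀ ≤ F_{q³}* the subgroup of order q² + q + 1, L₀ = {h : Tr_{q³/q}(h) = 0, N_{q³/q}(h) = 1}, and R = {λ + h^{q²} − h^q : λ ∈ F_q, h ∈ L₀}. Suppose z = xy ∈ R with x ∈ C₀ and y ∈ F_q*. Then x⁻¹y ∈ −R. Consequently, for each e ∈ F_q*, the set {x⁻¹y : x ∈ C₀, y ∈ F_q*, xy ∈ eR} equals −eR. -/

import Mathlib

/-! Write σ for the Frobenius a ↦ a^q, an automorphism of order 3 of F_{q³}. If
xy = λ + σ²h − σh with N(x) = 1 and σy = y, conjugating this relation by σ and σ² and pairing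
the three relations with h, σh, σ²h shows that k = xh has trace 0; it also has norm 1, and
x⁻¹y = σx·σ²x·y differs from −(σ²k − σk) by a σ-fixed element.

For the set identity, "⊆" is the first part after scaling by e. For "⊇": as q ≡ 2 (mod 3),
cubing is bijective on F_q, so r ∈ R factors as r = (r/b)·b with b ∈ F_q, b³ = N(r); the first
part applied to r/b and b gives −b²/r ∈ R, and −er = (b/r)⁻¹·(−eb) with (b/r)·(−eb) = e·(−b²/r).
Here r ≠ 0 because 0 ∉ R when 3 ≠ 0 in F_{q³}. -/

/-- `h` belongs to the set `L₀ = {h ∈ F_{q³}* : Tr(h) = 0, N(h) = 1}`. -/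
def memL0 (q : ℕ) {K : Type} [Field K] (h : K) : Prop :=
  h ≠ 0 ∧ h + h ^ q + h ^ q ^ 2 = 0 ∧ h ^ (1 + q + q ^ 2) = 1

/-- `r` belongs to the set `R = {λ + h^{q²} − h^q : λ ∈ F_q, h ∈ L₀}`. -/
def memR (q : ℕ) {K : Type} [Field K] (r : K) : Prop :=
  ∃ l h : K, l ^ q = l ∧ memL0 q h ∧ r = l + h ^ q ^ 2 - h ^ q

theorem exists_ringHom_eq_pow_of_dvd_card {K : Type*} [Field K] [Fintype K] {q : ℕ}
    (hq : q ∣ Fintype.card K) : ∃ φ : K →+* K, ∀ a, φ a = a ^ q := by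
  obtain ⟨n, hp, hcard⟩ := FiniteField.card K (ringChar K)
  obtain ⟨m, -, rfl⟩ := (Nat.dvd_prime_pow hp).mp (hcard ▸ hq)
  have : Fact (ringChar K).Prime := ⟨hp⟩
  exact ⟨iterateFrobenius K (ringChar K) m, fun a => iterateFrobenius_def ..⟩

theorem cast_ne_zero_of_card_eq_pow {K : Type*} [Field K] [Fintype K] {p q n : ℕ}
    (hp : p.Prime) (hpq : ¬ p ∣ q) (hK : Fintype.card K = q ^ n) : (p : K) ≠ 0 := by
  intro hp0
  have : CharP K p := (CharP.charP_iff_prime_eq_zero hp).mpr hp0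
  obtain ⟨k, -, hcard⟩ := FiniteField.card K p
  exact hpq (hp.dvd_of_dvd_pow (hK ▸ hcard ▸ dvd_pow_self p k.ne_zero))

theorem exists_pow_three_eq_of_pow_eq_self {M : Type*} [Monoid M] {q : ℕ} (hq : q % 3 = 2)
    {a : M} (ha : a ^ q = a) : ∃ b : M, b ^ q = b ∧ b ^ 3 = a := by
  -- `b³ = a ^ (2q - 1) = a ^ q * a ^ (q - 1) = a ^ q`
  refine ⟨a ^ ((2 * q - 1) / 3), by rw [pow_right_comm, ha], ?_⟩
  rw [← pow_mul, Nat.div_mul_cancel (by omega), show 2 * q - 1 = q + (q - 1) by omega, pow_add,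
    ha, ← pow_succ', Nat.sub_add_cancel (by omega), ha]

namespace CyclicCubic

variable {K : Type*} [Field K] (σ : K →+* K)

def trace (x : K) : K := x + σ x + σ (σ x)

def norm (x : K) : K := x * σ x * σ (σ x)

def L₀ : Set K := {h | trace σ h = 0 ∧ norm σ h = 1}

def R : Set K := {r | ∃ l h, σ l = l ∧ h ∈ L₀ σ ∧ r = l + σ (σ h) - σ h}

variable {σ}

theorem norm_mul (x y : K) : norm σ (x * y) = norm σ x * norm σ y := by
  simp only [norm, map_mul]; ring

theorem norm_ne_zero {x : K} (hx : x ≠ 0) : norm σ x ≠ 0 := by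
  simp only [norm, ne_eq, mul_eq_zero, map_eq_zero, or_self, hx, not_false_eq_true]

theorem norm_inv (x : K) : norm σ x⁻¹ = (norm σ x)⁻¹ := by
  simp only [norm, map_inv₀, mul_inv]

theorem ne_zero_of_norm_eq_one {x : K} (hx : norm σ x = 1) : x ≠ 0 := by
  rintro rfl
  simp [norm] at hx

theorem norm_of_map_eq {b : K} (hb : σ b = b) : norm σ b = b ^ 3 := by
  rw [norm, hb, hb]; ring

theorem inv_eq_of_norm_eq_one {x : K} (hx : norm σ x = 1) : x⁻¹ = σ x * σ (σ x) :=
  inv_eq_of_mul_eq_one_right (by rw [← mul_assoc]; exact hx)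

theorem norm_mul_inv_eq_one {r b : K} (hr : r ≠ 0) (hb : σ b = b) (hb3 : b ^ 3 = norm σ r) :
    norm σ (r * b⁻¹) = 1 := by
  rw [norm_mul, norm_of_map_eq (b := b⁻¹) (by rw [map_inv₀, hb]), inv_pow, hb3]
  exact mul_inv_cancel₀ (norm_ne_zero hr)

section

variable (hσ : ∀ a, σ (σ (σ a)) = a)
include hσ

theorem map_norm (x : K) : σ (norm σ x) = norm σ x := by
  simp only [norm, map_mul, hσ]; ring

theorem neg_inv_mul_mem_R {x y : K} (hx : norm σ x = 1) (hy0 : y ≠ 0) (hy : σ y = y)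
    (hxy : x * y ∈ R σ) : -(x⁻¹ * y) ∈ R σ := by
  obtain ⟨l, h, hl, ⟨htr, hN⟩, hz⟩ := hxy
  have hz₁ : σ x * y = l + h - σ (σ h) := by
    simpa only [map_mul, map_add, map_sub, hy, hl, hσ] using congrArg σ hz
  have hz₂ : σ (σ x) * y = l + σ h - h := by
    simpa only [map_mul, map_add, map_sub, hy, hl, hσ] using congrArg σ hz₁
  have hk : trace σ (x * h) = 0 := by
    refine (mul_eq_zero.mp ?_).resolve_right hy0
    simp only [trace, map_mul] at htr ⊢
    linear_combination h * hz + σ h * hz₁ + σ (σ h) * hz₂ + l * htr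
  refine ⟨-(x⁻¹ * y) - (σ (σ (x * h)) - σ (x * h)), x * h, ?_,
    ⟨hk, by rw [norm_mul, hx, hN, one_mul]⟩, by ring⟩
  simp only [trace, map_mul] at htr hk
  rw [inv_eq_of_norm_eq_one hx]
  simp only [map_neg, map_sub, map_mul, hσ, hy]
  linear_combination (2 : K) * hk + x * hz₁ - x * hz₂ - x * htr - σ x * hz + σ x * hz₂ - σ x * htr

theorem zero_notMem_R (h3 : (3 : K) ≠ 0) : (0 : K) ∉ R σ := by
  rintro ⟨l, h, hl, ⟨htr, hN⟩, hz⟩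
  have hz₁ : 0 = l + h - σ (σ h) := by
    simpa only [map_zero, map_add, map_sub, hl, hσ] using congrArg σ hz
  have hz₂ : 0 = l + σ h - h := by
    simpa only [map_zero, map_add, map_sub, hl, hσ] using congrArg σ hz₁
  have h3h : 3 * h = 0 := by
    simp only [trace] at htr
    linear_combination htr - hz₁ + hz₂
  exact ne_zero_of_norm_eq_one hN ((mul_eq_zero.mp h3h).resolve_left h3)

theorem setOf_inv_mul_eq (h3 : (3 : K) ≠ 0)
    (hcube : ∀ a, σ a = a → ∃ b, σ b = b ∧ b ^ 3 = a) {e : K} (he : e ≠ 0) (heσ : σ e = e) :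
    {w : K | ∃ x y : K, norm σ x = 1 ∧ y ≠ 0 ∧ σ y = y ∧ (∃ r ∈ R σ, x * y = e * r) ∧
        w = x⁻¹ * y} = {w : K | ∃ r ∈ R σ, w = -(e * r)} := by
  ext w
  constructor
  · rintro ⟨x, y, hx, hy0, hy, ⟨r, hr, hxy⟩, rfl⟩
    have hxy' : x * (y * e⁻¹) ∈ R σ := by
      rwa [← mul_assoc, hxy, mul_comm e, mul_assoc, mul_inv_cancel₀ he, mul_one]
    refine ⟨_, neg_inv_mul_mem_R hσ hx (mul_ne_zero hy0 (inv_ne_zero he))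
      (by rw [map_mul, map_inv₀, hy, heσ]) hxy', ?_⟩
    field_simp
  · rintro ⟨r, hr, rfl⟩
    have hr0 : r ≠ 0 := fun h => zero_notMem_R hσ h3 (h ▸ hr)
    obtain ⟨b, hb, hb3⟩ := hcube _ (map_norm hσ r)
    have hb0 : b ≠ 0 := by
      rintro rfl
      exact norm_ne_zero hr0 (by rw [← hb3, zero_pow three_ne_zero])
    have hx := norm_mul_inv_eq_one hr0 hb hb3
    have hmem := neg_inv_mul_mem_R hσ hx hb0 hb (by rwa [inv_mul_cancel_right₀ hb0])
    refine ⟨(r * b⁻¹)⁻¹, -(e * b), by rw [norm_inv, hx, inv_one],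
      neg_ne_zero.mpr (mul_ne_zero he hb0), by rw [map_neg, map_mul, heσ, hb],
      ⟨_, hmem, by ring⟩, ?_⟩
    field_simp

end

theorem norm_eq_pow {q : ℕ} (hσ : ∀ a, σ a = a ^ q) (x : K) :
    norm σ x = x ^ (q ^ 2 + q + 1) := by
  rw [norm, hσ, hσ, ← pow_mul, ← sq, pow_add, pow_add, pow_one]; ring

end CyclicCubic

open CyclicCubic in
theorem memR_iff_mem_R {K : Type} [Field K] {σ : K →+* K} {q : ℕ} (hσ : ∀ a, σ a = a ^ q)
    (r : K) : memR q r ↔ r ∈ R σ := by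
  have hσσ : ∀ a, a ^ q ^ 2 = σ (σ a) := fun a => by rw [hσ, hσ, ← pow_mul, sq]
  have hN : ∀ a, a ^ (1 + q + q ^ 2) = norm σ a := fun a => by
    rw [norm_eq_pow hσ]; ring_nf
  simp only [memR, memL0, R, L₀, trace, Set.mem_ofPred_eq, hσσ, hN, ← hσ]
  constructor
  · rintro ⟨l, h, hl, ⟨-, hh⟩, rfl⟩
    exact ⟨l, h, hl, hh, rfl⟩
  · rintro ⟨l, h, hl, hh, rfl⟩
    exact ⟨l, h, hl, ⟨ne_zero_of_norm_eq_one hh.2, hh⟩, rfl⟩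

theorem Re'_eq_neg_eR (q : ℕ) (hq : q % 3 = 2)
    (K : Type) [Field K] [Fintype K] (hK : Fintype.card K = q ^ 3) :
    (∀ x y : K, x ^ (q ^ 2 + q + 1) = 1 → y ≠ 0 → y ^ q = y →
        memR q (x * y) → ∃ r : K, memR q r ∧ x⁻¹ * y = -r) ∧
      (∀ e : K, e ≠ 0 → e ^ q = e →
        {w : K | ∃ x y : K, x ^ (q ^ 2 + q + 1) = 1 ∧ y ≠ 0 ∧ y ^ q = y ∧
            (∃ r : K, memR q r ∧ x * y = e * r) ∧ w = x⁻¹ * y} =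
          {w : K | ∃ r : K, memR q r ∧ w = -(e * r)}) := by
  obtain ⟨φ, hφ⟩ := exists_ringHom_eq_pow_of_dvd_card (K := K) ⟨q ^ 2, by rw [hK]; ring⟩
  have hφ3 : ∀ a : K, φ (φ (φ a)) = a := fun a => by
    rw [hφ, hφ, hφ, ← pow_mul, ← pow_mul, ← pow_three, ← hK, FiniteField.pow_card]
  have h3 : (3 : K) ≠ 0 := by
    exact_mod_cast cast_ne_zero_of_card_eq_pow Nat.prime_three (by omega) hK
  have hcube : ∀ a : K, φ a = a → ∃ b, φ b = b ∧ b ^ 3 = a := by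
    simpa only [hφ] using fun a => exists_pow_three_eq_of_pow_eq_self (M := K) hq (a := a)
  simp only [← CyclicCubic.norm_eq_pow hφ, memR_iff_mem_R hφ, ← hφ]
  exact ⟨fun x y hx hy0 hy hxy =>
      ⟨_, CyclicCubic.neg_inv_mul_mem_R hφ3 hx hy0 hy hxy, (neg_neg _).symm⟩,
    fun e he heφ => CyclicCubic.setOf_inv_mul_eq hφ3 h3 hcube he heφ⟩
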